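/- If Ψ has unit-norm columns and S is a positive integer with S < 1/μ(Ψ) + 1, then the S-restricted isometry constant of Ψ satisfies δ_S ≤ (S−1)·μ(Ψ). -/
import Mathlib

open Finset

noncomputable def coherence {M K : ℕ} (Ψ : Matrix (Fin M) (Fin K) ℝ) : ℝ :=
  sSup {x : ℝ | ∃ i j : Fin K, i ≠ j ∧
    x = |∑ m, Ψ m i * Ψ m j| /
      (Real.sqrt (∑ m, (Ψ m i)^2) * Real.sqrt (∑ m, (Ψ m j)^2))}

noncomputable def l0 {K : ℕ} (c : Fin K → ℝ) : ℕ := (Finset.univ.filter fun j => c j ≠ 0).card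

noncomputable def l1 {K : ℕ} (c : Fin K → ℝ) : ℝ := ∑ j, |c j|

noncomputable def l2 {n : ℕ} (c : Fin n → ℝ) : ℝ := Real.sqrt (∑ j, (c j)^2)

noncomputable def ripConst {M K : ℕ} (Ψ : Matrix (Fin M) (Fin K) ℝ) (S : ℕ) : ℝ :=
  sInf {δ : ℝ | 0 ≤ δ ∧ ∀ c : Fin K → ℝ, l0 c ≤ S →
    (1 - δ) * (l2 c)^2 ≤ (l2 (Ψ.mulVec c))^2 ∧
    (l2 (Ψ.mulVec c))^2 ≤ (1 + δ) * (l2 c)^2}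

lemma coherence_nonneg {M K : ℕ} (Ψ : Matrix (Fin M) (Fin K) ℝ) : 0 ≤ coherence Ψ := by
  apply Real.sSup_nonneg
  rintro x ⟨i, j, hij, rfl⟩
  positivity

lemma coherence_bddAbove {M K : ℕ} (Ψ : Matrix (Fin M) (Fin K) ℝ) :
    BddAbove {x : ℝ | ∃ i j : Fin K, i ≠ j ∧
    x = |∑ m, Ψ m i * Ψ m j| /
      (Real.sqrt (∑ m, (Ψ m i)^2) * Real.sqrt (∑ m, (Ψ m j)^2))} := by
  apply BddAbove.mono (t := Set.range (fun p : Fin K × Fin K =>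
      |∑ m, Ψ m p.1 * Ψ m p.2| /
      (Real.sqrt (∑ m, (Ψ m p.1)^2) * Real.sqrt (∑ m, (Ψ m p.2)^2))))
  · rintro x ⟨i, j, hij, rfl⟩; exact ⟨(i, j), rfl⟩
  · exact (Set.finite_range _).bddAbove

lemma abs_inner_le_coherence {M K : ℕ} (Ψ : Matrix (Fin M) (Fin K) ℝ)
    (hcol : ∀ j : Fin K, ∑ m, (Ψ m j)^2 = 1) {i j : Fin K} (hij : i ≠ j) :
    |∑ m, Ψ m i * Ψ m j| ≤ coherence Ψ := by
  apply le_csSup (coherence_bddAbove Ψ)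
  exact ⟨i, j, hij, by rw [hcol i, hcol j]; simp⟩

theorem rip_le_coherence_bound {M K : ℕ} (Ψ : Matrix (Fin M) (Fin K) ℝ)
    (hcol : ∀ j : Fin K, ∑ m, (Ψ m j)^2 = 1) (S : ℕ) (hS : 1 ≤ S)
    (hSμ : ((S : ℝ) - 1) * coherence Ψ < 1) :
    ripConst Ψ S ≤ ((S : ℝ) - 1) * coherence Ψ := by
  set μ := coherence Ψ with hμ
  have hμ0 : 0 ≤ μ := coherence_nonneg Ψ
  have hS1 : (0:ℝ) ≤ (S:ℝ) - 1 := by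
    have : (1:ℝ) ≤ (S:ℝ) := by exact_mod_cast hS
    linarith
  set δ := ((S:ℝ) - 1) * μ with hδ
  have hδ0 : 0 ≤ δ := mul_nonneg hS1 hμ0
  apply csInf_le
  · exact ⟨0, by rintro x ⟨hx, -⟩; exact hx⟩
  refine ⟨hδ0, fun c hc => ?_⟩
  -- notation
  have hl2c : (l2 c)^2 = ∑ j, (c j)^2 := by
    rw [l2, Real.sq_sqrt (by positivity)]
  have hl2Ψ : (l2 (Ψ.mulVec c))^2 = ∑ m, (∑ j, Ψ m j * c j)^2 := by
    rw [l2, Real.sq_sqrt (by positivity)]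
    rfl
  -- expand
  have hexpand : (l2 (Ψ.mulVec c))^2 =
      ∑ i, ∑ j, c i * c j * ∑ m, Ψ m i * Ψ m j := by
    rw [hl2Ψ]
    simp_rw [sq, Finset.sum_mul_sum, Finset.mul_sum]
    rw [Finset.sum_comm]
    congr 1; ext i
    rw [Finset.sum_comm]
    congr 1; ext j
    congr 1; ext m
    ring
  have hsplit : ∑ i, ∑ j, c i * c j * ∑ m, Ψ m i * Ψ m j =
      (∑ j, (c j)^2) + ∑ i, ∑ j ∈ Finset.univ.erase i, c i * c j * ∑ m, Ψ m i * Ψ m j := by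
    rw [← Finset.sum_add_distrib]
    congr 1; ext i
    rw [← Finset.add_sum_erase (a := i) _ _ (Finset.mem_univ i)]
    have h1 : ∑ m, Ψ m i * Ψ m i = 1 := by simpa [sq] using hcol i
    rw [h1]
    ring_nf
  set E := ∑ i, ∑ j ∈ Finset.univ.erase i, c i * c j * ∑ m, Ψ m i * Ψ m j with hE
  -- bound |E|
  have hEbound : |E| ≤ μ * ((∑ j, |c j|)^2 - ∑ j, (c j)^2) := by
    have h1 : |E| ≤ ∑ i, ∑ j ∈ Finset.univ.erase i, |c i| * |c j| * μ := by
      refine (Finset.abs_sum_le_sum_abs _ _).trans (Finset.sum_le_sum fun i _ => ?_)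
      refine (Finset.abs_sum_le_sum_abs _ _).trans (Finset.sum_le_sum fun j hj => ?_)
      rw [abs_mul, abs_mul]
      exact mul_le_mul_of_nonneg_left
        (abs_inner_le_coherence Ψ hcol (Finset.ne_of_mem_erase hj).symm)
        (by positivity)
    have h2 : ∑ i, ∑ j ∈ Finset.univ.erase i, |c i| * |c j| * μ =
        μ * ((∑ j, |c j|)^2 - ∑ j, (c j)^2) := by
      have : ∀ i : Fin K, ∑ j ∈ Finset.univ.erase i, |c i| * |c j| * μ =
          μ * (|c i| * ((∑ j, |c j|) - |c i|)) := by
        intro i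
        have he : ∑ j ∈ Finset.univ.erase i, |c j| = (∑ j, |c j|) - |c i| :=
          Finset.sum_erase_eq_sub (Finset.mem_univ i)
        calc ∑ j ∈ Finset.univ.erase i, |c i| * |c j| * μ
            = μ * |c i| * ∑ j ∈ Finset.univ.erase i, |c j| := by
              rw [Finset.mul_sum]; exact Finset.sum_congr rfl fun j _ => by ring
          _ = μ * (|c i| * ((∑ j, |c j|) - |c i|)) := by rw [he]; ring
      simp_rw [this]
      rw [← Finset.mul_sum]
      congr 1
      simp_rw [mul_sub, Finset.sum_sub_distrib, ← Finset.sum_mul, ← sq, sq_abs]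
    linarith
  -- Cauchy-Schwarz step
  have hCS : (∑ j, |c j|)^2 ≤ (S:ℝ) * ∑ j, (c j)^2 := by
    set T := Finset.univ.filter fun j => c j ≠ 0 with hT
    have hsum : ∑ j, |c j| = ∑ j ∈ T, |c j| := by
      symm
      apply Finset.sum_subset (Finset.subset_univ T)
      intro x _ hx
      simp only [hT, Finset.mem_filter, Finset.mem_univ, true_and, not_not] at hx
      simp [hx]
    have hsq : ∑ j ∈ T, (c j)^2 ≤ ∑ j, (c j)^2 :=
      Finset.sum_le_sum_of_subset_of_nonneg (Finset.subset_univ T)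
        (fun _ _ _ => by positivity)
    have hcard : (T.card : ℝ) ≤ (S:ℝ) := by exact_mod_cast hc
    calc (∑ j, |c j|)^2 = (∑ j ∈ T, |c j|)^2 := by rw [hsum]
      _ ≤ T.card * ∑ j ∈ T, |c j|^2 := sq_sum_le_card_mul_sum_sq
      _ = T.card * ∑ j ∈ T, (c j)^2 := by simp_rw [sq_abs]
      _ ≤ (S:ℝ) * ∑ j, (c j)^2 := by
          apply mul_le_mul hcard hsq (Finset.sum_nonneg fun _ _ => by positivity)
            (by positivity)
  have key : |E| ≤ δ * (l2 c)^2 := by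
    rw [hδ, hl2c]
    calc |E| ≤ μ * ((∑ j, |c j|)^2 - ∑ j, (c j)^2) := hEbound
      _ ≤ μ * (((S:ℝ) - 1) * ∑ j, (c j)^2) := by
          apply mul_le_mul_of_nonneg_left _ hμ0
          linarith
      _ = ((S:ℝ) - 1) * μ * ∑ j, (c j)^2 := by ring
  have hEq : (l2 (Ψ.mulVec c))^2 = (l2 c)^2 + E := by
    rw [hexpand, hsplit, hl2c]
  rw [abs_le] at key
  constructor <;> linarith [key.1, key.2]
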